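/- The map sending a Knapsack instance (w, v, C, P) to the PEM-1D instance with t_i(L) = w_i, t_i(H) = 0, e_i(L) = -v_i, e_i(H) = 0, T' = C, EC = -P is a correct reduction: the Knapsack instance is a yes-instance if and only if the constructed PEM-1D instance is a yes-instance. -/

import Mathlib

open Finset

theorem Finset.exists_iff_exists_bool_filter {ι : Type*} [Fintype ι]
    (p : Finset ι → Prop) : (∃ S, p S) ↔ ∃ X : ι → Bool, p {i | X i} := by
  classical
  exact ⟨fun ⟨S, hS⟩ => ⟨fun i => i ∈ S, by simpa using hS⟩, fun ⟨X, hX⟩ => ⟨_, hX⟩⟩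

theorem knapsack_to_pem1d_reduction_correct_general
    (n : ℕ) (w v : Fin n → ℚ) (C P : ℚ) :
    (∃ S : Finset (Fin n), (∑ i ∈ S, w i) ≤ C ∧ P ≤ ∑ i ∈ S, v i) ↔
    (∃ X : Fin n → Bool,
      (∑ i, (if X i then w i else 0)) ≤ C ∧
      (∑ i, (if X i then -v i else 0)) ≤ -P) := by
  rw [Finset.exists_iff_exists_bool_filter]
  refine exists_congr fun X => ?_
  rw [← sum_filter, ← sum_filter, sum_neg_distrib, neg_le_neg_iff]

/-- Correctness of the Knapsack-to-PEM-1D reduction: with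
`t_i(L) = w_i`, `t_i(H) = 0`, `e_i(L) = -v_i`, `e_i(H) = 0`, `T' = C`, `EC = -P`,
the Knapsack instance is a yes-instance iff the PEM-1D instance is. -/
theorem knapsack_to_pem1d_reduction_correct
    (n : ℕ) (w v : Fin n → ℚ) (C P : ℚ)
    (hw : ∀ i, 0 < w i) (hv : ∀ i, 0 < v i) :
    (∃ S : Finset (Fin n), (∑ i ∈ S, w i) ≤ C ∧ P ≤ ∑ i ∈ S, v i) ↔
    (∃ X : Fin n → Bool,
      (∑ i, (if X i then w i else 0)) ≤ C ∧
      (∑ i, (if X i then -v i else 0)) ≤ -P) :=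
  knapsack_to_pem1d_reduction_correct_general n w v C P
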